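/- arXiv:math-ph/0411019 — 3 statements merged into one kernel-verified Lean document; each statement's English description precedes it below -/
import Mathlib

section
/- Let m ≥ 1, q = (q_1,…,q_m) with each q_i ∈ ℕ, q_i ≥ 1, τ(i) := Σ_{l=1}^{i−1} 2q_l, K := 2(q_1+⋯+q_m), δ ∈ {+1,−1}, and c ∈ ℂ. Define b_{δ,q_i}(z) := 1 if δ = +1 and b_{δ,q_i}(z) := i·z^{1−2q_i} if δ = −1. Let Z : ℝ → ℂ∖{0} and W_1,…,W_m : ℝ → ℂ be measurable such that all integrands below are absolutely integrable. Then the determinant of the K×K matrix, with rows indexed by j = 1,…,K and columns indexed by pairs (i, l_i) with 1 ≤ i ≤ m and 1 ≤ l_i ≤ 2q_i (ordered lexicographically in (i, l_i)), whose ((i,l_i), j) entry is ∫_ℝ W_i(t) · Z(t)^{l_i−1} · (Z(t)^δ + c)^{j−1} dt, equals ∏_{i=1}^m (1/(2q_i)!) · ∫_{ℝ^K} ∏_{i=1}^m ∏_{l_i=τ(i)+1}^{τ(i+1)} W_i(t_{l_i}) · b_{δ,q_i}(Z(t_{l_i})) · ∏_{i=1}^m Δ_{2q_i}(Z(t_{τ(i)+1}),…,Z(t_{τ(i+1)}))²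 · ∏_{1≤j<k≤m} ∏_{l_k=τ(k)+1}^{τ(k+1)} ∏_{l_j=τ(j)+1}^{τ(j+1)} (Z(t_{l_k})^δ − Z(t_{l_j})^δ) dt. -/
/-!
Andréief's identity turns the determinant of the moment matrix `(∫ F_a G_b)` into the `K`-fold
integral of `∏_a F_a(t_a) · det [G_b(t_a)]`. Enumerating the pairs `(i, l)` lexicographically, the
second factor is the Vandermonde determinant of the points `Z(t_a)^δ + c`; it splits into the
Vandermonde determinants of the blocks times the cross-block products, and the shift `c` drops out.
Being alternating in `t`, it lets us average the integral over the `∏ (2 q_i)!` permutations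
within the blocks, which antisymmetrizes the monomials `Z(t_{i,l})^l` into the block Vandermonde
determinants `Δ_{2q_i}(Z)`. For `δ = -1`, finally, `Δ(1/z) = ∏ (i z^{1-2q}) Δ(z)` on a block of
size `2q`.
-/

open MeasureTheory Finset

noncomputable def vandC {n : ℕ} (z : Fin n → ℂ) : ℂ :=
  ∏ j : Fin n, ∏ k ∈ Finset.Ioi j, (z k - z j)

section LexIndex

variable {m : ℕ} {n : Fin m → ℕ}

theorem finSigmaFinEquiv_apply_eq_sum_Iio (a : Σ i : Fin m, Fin (n i)) :
    (finSigmaFinEquiv a : ℕ) = ∑ i ∈ Iio a.1, n i + a.2 := by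
  have hIio : (univ : Finset (Fin a.1)).map (Fin.castLEEmb a.1.2.le) = Iio a.1 := by
    ext i
    simp only [mem_map, mem_univ, true_and, mem_Iio]
    constructor
    · rintro ⟨j, rfl⟩
      exact j.2
    · exact fun h => ⟨⟨i, h⟩, rfl⟩
  rw [finSigmaFinEquiv_apply, ← hIio, sum_map]
  rfl

theorem sum_Iio_add_le_sum_Iio {i k : Fin m} (h : i < k) :
    ∑ j ∈ Iio i, n j + n i ≤ ∑ j ∈ Iio k, n j := by
  rw [add_comm, ← sum_insert (f := n) notMem_Iio_self, Iio_insert]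
  exact sum_le_sum_of_subset fun j hj => mem_Iio.mpr ((mem_Iic.mp hj).trans_lt h)

theorem finSigmaFinEquiv_lt_finSigmaFinEquiv_iff {i k : Fin m} (l : Fin (n i)) (l' : Fin (n k)) :
    finSigmaFinEquiv (⟨i, l⟩ : Σ i, Fin (n i)) < finSigmaFinEquiv ⟨k, l'⟩ ↔
      i < k ∨ i = k ∧ (l : ℕ) < l' := by
  rw [Fin.lt_def, finSigmaFinEquiv_apply_eq_sum_Iio, finSigmaFinEquiv_apply_eq_sum_Iio]
  rcases lt_trichotomy i k with h | rfl | h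
  · have := sum_Iio_add_le_sum_Iio (n := n) h
    have := l.2
    simp only [h, true_or, iff_true]
    omega
  · simp
  · have := sum_Iio_add_le_sum_Iio (n := n) h
    have := l'.2
    simp only [h.not_gt, h.ne', false_and, or_self, iff_false]
    omega

theorem prod_Ioi_finSigmaFinEquiv_symm {M : Type*} [CommMonoid M]
    (f : (Σ i : Fin m, Fin (n i)) → (Σ i : Fin m, Fin (n i)) → M) :
    ∏ p : Fin (∑ i, n i), ∏ p' ∈ Ioi p, f (finSigmaFinEquiv.symm p) (finSigmaFinEquiv.symm p') =
      (∏ i, ∏ l : Fin (n i), ∏ l' ∈ Ioi l, f ⟨i, l⟩ ⟨i, l'⟩) *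
        ∏ j, ∏ k ∈ Ioi j, ∏ lk : Fin (n k), ∏ lj : Fin (n j), f ⟨j, lj⟩ ⟨k, lk⟩ := by
  have hIoi : ∀ {N : ℕ} (g : Fin N → M) (p : Fin N),
      ∏ p' ∈ Ioi p, g p' = ∏ p', if p < p' then g p' else 1 :=
    fun g p => by rw [← filter_lt_eq_Ioi, prod_filter]
  simp_rw [hIoi]
  rw [← finSigmaFinEquiv.prod_comp]
  simp_rw [← finSigmaFinEquiv.prod_comp (fun p' => if _ < p' then _ else _),
    Equiv.symm_apply_apply, ← univ_sigma_univ, prod_sigma,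
    finSigmaFinEquiv_lt_finSigmaFinEquiv_iff, ite_or]
  have hsplit : ∀ (i k : Fin m) (l : Fin (n i)) (l' : Fin (n k)) (x : M),
      (if i < k then x else if i = k ∧ (l : ℕ) < l' then x else 1) =
        (if i = k ∧ (l : ℕ) < l' then x else 1) * (if i < k then x else 1) := by
    intro i k l l' x
    rcases lt_trichotomy i k with h | rfl | h
    · simp [h, h.ne]
    · simp
    · simp [h.not_gt, h.ne']
  simp_rw [hsplit, prod_mul_distrib]
  congr 1
  · refine prod_congr rfl fun i _ => prod_congr rfl fun l _ => ?_
    rw [Fintype.prod_eq_single i fun k hk => prod_eq_one fun l' _ => if_neg fun h => hk h.1.symm]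
    simp only [true_and, Fin.val_fin_lt]
  · refine prod_congr rfl fun i _ => ?_
    rw [prod_comm]
    refine prod_congr rfl fun k _ => ?_
    rw [prod_comm]
    simp_rw [prod_ite_irrel, prod_const_one]

theorem det_pow_finSigmaFinEquiv (x : (Σ i : Fin m, Fin (n i)) → ℂ) :
    (Matrix.of fun b a : Σ i : Fin m, Fin (n i) => x a ^ (finSigmaFinEquiv b : ℕ)).det =
      (∏ i, vandC fun l => x ⟨i, l⟩) *
        ∏ j, ∏ k ∈ Ioi j, ∏ lk : Fin (n k), ∏ lj : Fin (n j), (x ⟨k, lk⟩ - x ⟨j, lj⟩) := by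
  rw [← Matrix.det_reindex_self finSigmaFinEquiv,
    show Matrix.reindex finSigmaFinEquiv finSigmaFinEquiv
        (Matrix.of fun b a : Σ i : Fin m, Fin (n i) => x a ^ (finSigmaFinEquiv b : ℕ)) =
      (Matrix.vandermonde (x ∘ finSigmaFinEquiv.symm)).transpose by
      ext
      simp only [Matrix.reindex_apply, Matrix.submatrix_apply, Matrix.of_apply,
        Matrix.transpose_apply, Matrix.vandermonde_apply, Equiv.apply_symm_apply,
        Function.comp_apply],
    Matrix.det_transpose, Matrix.det_vandermonde]
  exact prod_Ioi_finSigmaFinEquiv_symm fun a b => x b - x a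

end LexIndex

section Vandermonde

variable {n : ℕ}

theorem vandC_add_const (z : Fin n → ℂ) (c : ℂ) : vandC (fun l => z l + c) = vandC z := by
  simp only [vandC, add_sub_add_right_eq_sub]

theorem vandC_eq_sum_sign (z : Fin n → ℂ) :
    vandC z = ∑ τ : Equiv.Perm (Fin n), ((Equiv.Perm.sign τ : ℤ) : ℂ) * ∏ l, z (τ l) ^ (l : ℕ) := by
  rw [vandC, ← Matrix.det_vandermonde, Matrix.det_apply']
  rfl

theorem Fin.prod_Ioi_const {M : Type*} [CommMonoid M] (x : M) :
    ∏ j : Fin n, ∏ _k ∈ Ioi j, x = x ^ n.choose 2 := by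
  simp_rw [Finset.prod_const, Fin.card_Ioi, prod_pow_eq_pow_sum]
  congr 1
  rw [Fin.sum_univ_eq_sum_range (fun j => n - 1 - j), sum_range_reflect (fun j => j) n,
    sum_range_id, Nat.choose_two_right]

theorem Fin.prod_Ioi_mul {M : Type*} [CommMonoid M] (z : Fin n → M) :
    ∏ j : Fin n, ∏ k ∈ Ioi j, (z j * z k) = ∏ l, z l ^ (n - 1) := by
  have hswap : ∏ j : Fin n, ∏ k ∈ Ioi j, z k = ∏ k : Fin n, ∏ _j ∈ Iio k, z k :=
    prod_comm' fun j k => by simp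
  rw [prod_congr rfl fun j _ => Finset.prod_mul_distrib, Finset.prod_mul_distrib, hswap,
    ← Finset.prod_mul_distrib]
  refine prod_congr rfl fun l _ => ?_
  rw [Finset.prod_const, Finset.prod_const, ← pow_add, Fin.card_Ioi, Fin.card_Iio]
  have := l.2
  congr 1
  omega

theorem vandC_inv (z : Fin n → ℂ) (hz : ∀ l, z l ≠ 0) :
    vandC (fun l => (z l)⁻¹) = (-1) ^ n.choose 2 * (∏ l, z l ^ (1 - n : ℤ)) * vandC z := by
  have hdiff : ∀ j k, (z k)⁻¹ - (z j)⁻¹ = -1 * (z j * z k)⁻¹ * (z k - z j) := fun j k => by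
    field_simp [hz j, hz k]
    ring
  have hpow : ∀ l, z l ^ (1 - n : ℤ) = (z l ^ (n - 1))⁻¹ := fun l => by
    rw [← zpow_natCast, ← zpow_neg, Nat.cast_sub l.pos, Nat.cast_one, neg_sub]
  simp_rw [vandC, hdiff, prod_mul_distrib, Fin.prod_Ioi_const, prod_inv_distrib, Fin.prod_Ioi_mul,
    hpow, prod_inv_distrib]

theorem neg_one_pow_two_mul_choose_two {R : Type*} [Monoid R] [HasDistribNeg R] (q : ℕ) :
    (-1 : R) ^ (2 * q).choose 2 = (-1) ^ q := by
  have h : (2 * q).choose 2 = q + 2 * (q * (q - 1)) := by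
    rcases q with _ | q
    · rfl
    rw [Nat.choose_two_right, Nat.add_sub_cancel]
    apply Nat.div_eq_of_eq_mul_left two_pos
    rw [show 2 * (q + 1) - 1 = 2 * q + 1 by omega]
    ring
  rw [h, pow_add, pow_mul, neg_one_sq, one_pow, mul_one]

theorem vandC_inv_two_mul (q : ℕ) (z : Fin (2 * q) → ℂ) (hz : ∀ l, z l ≠ 0) :
    vandC (fun l => (z l)⁻¹) = (∏ l, Complex.I * z l ^ (1 - 2 * (q : ℤ))) * vandC z := by
  rw [vandC_inv z hz, neg_one_pow_two_mul_choose_two, prod_mul_distrib, prod_const, card_univ,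
    Fintype.card_fin, pow_mul, Complex.I_sq]
  push_cast
  rfl

theorem vandC_zpow_of_sign (q : ℕ) {δ : ℤ} (hδ : δ = 1 ∨ δ = -1) (z : Fin (2 * q) → ℂ)
    (hz : ∀ l, z l ≠ 0) :
    vandC (fun l => z l ^ δ) =
      (∏ l, if δ = 1 then 1 else Complex.I * z l ^ (1 - 2 * (q : ℤ))) * vandC z := by
  rcases hδ with rfl | rfl
  · simp
  · simpa using vandC_inv_two_mul q z hz

end Vandermonde

theorem Equiv.Perm.sign_sigmaCongrRight {α : Type*} [Fintype α] [DecidableEq α] {β : α → Type*}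
    [∀ a, Fintype (β a)] [∀ a, DecidableEq (β a)] (σ : ∀ a, Perm (β a)) :
    sign (sigmaCongrRight σ) = ∏ a, sign (σ a) := by
  have hsingle : ∀ a (τ : Perm (β a)), sign (sigmaCongrRight (Pi.mulSingle a τ)) = sign τ := by
    intro a τ
    let e := (Equiv.sigmaSubtype (β := β) a).symm
    rw [← sign_extendDomain τ e]
    congr 1
    ext ⟨a', b⟩ : 1
    by_cases h : a' = a
    · subst h
      rw [extendDomain_apply_subtype τ e rfl, sigmaCongrRight_apply, Pi.mulSingle_eq_same]
      rfl
    · rw [extendDomain_apply_not_subtype τ e h]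
      simp [h]
  -- both sides are homomorphisms in `σ`, so it suffices to compare them on a single fibre
  have hhom := MonoidHom.pi_ext (f := sign.comp (sigmaCongrRightHom β))
    (g := ∏ a, sign.comp (Pi.evalMonoidHom (fun a => Perm (β a)) a)) fun a τ => by
      rw [MonoidHom.comp_apply, sigmaCongrRightHom_apply, hsingle, MonoidHom.finsetProd_apply,
        Fintype.prod_eq_single a fun b hb => by simp [Pi.mulSingle_eq_of_ne hb]]
      simp
  simpa [MonoidHom.finsetProd_apply] using DFunLike.congr_fun hhom σ

theorem sum_sign_sigmaCongrRight_mul_prod {m : ℕ} {n : Fin m → ℕ}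
    (x y : (Σ i : Fin m, Fin (n i)) → ℂ) :
    ∑ σ : ∀ i, Equiv.Perm (Fin (n i)),
        ((Equiv.Perm.sign (Equiv.Perm.sigmaCongrRight σ) : ℤ) : ℂ) *
          ∏ a, y (Equiv.Perm.sigmaCongrRight σ a) *
            x (Equiv.Perm.sigmaCongrRight σ a) ^ (a.2 : ℕ) =
      (∏ a, y a) * ∏ i, vandC fun l => x ⟨i, l⟩ := by
  have hblock : ∀ σ : ∀ i, Equiv.Perm (Fin (n i)),
      ∏ a, x (Equiv.Perm.sigmaCongrRight σ a) ^ (a.2 : ℕ) =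
        ∏ i, ∏ l : Fin (n i), x ⟨i, σ i l⟩ ^ (l : ℕ) := fun σ => by
    rw [← univ_sigma_univ, prod_sigma]
    rfl
  simp_rw [prod_mul_distrib, Equiv.prod_comp, hblock, Equiv.Perm.sign_sigmaCongrRight,
    vandC_eq_sum_sign, Fintype.prod_sum, mul_left_comm _ (∏ a, y a), ← mul_sum]
  push_cast
  simp_rw [← prod_mul_distrib]

theorem Matrix.prod_mul_det_eq_sum_sign {ι α R : Type*} [Fintype ι] [DecidableEq ι] [CommRing R]
    (F G : ι → α → R) (t : ι → α) :
    (∏ a, F a (t a)) * (Matrix.of fun b a => G b (t a)).det =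
      ∑ σ : Equiv.Perm ι, ((Equiv.Perm.sign σ : ℤ) : R) * ∏ a, F a (t a) * G (σ a) (t a) := by
  rw [Matrix.det_apply', mul_sum]
  refine sum_congr rfl fun σ _ => ?_
  rw [prod_mul_distrib]
  simp only [Matrix.of_apply]
  ring

section Integration

variable {ι α 𝕜 : Type*} [Fintype ι] [MeasurableSpace α] {μ : Measure α} [SigmaFinite μ]
  [RCLike 𝕜]

omit [Fintype ι] in
theorem MeasurableEquiv.coe_piCongrLeft_symm_perm (π : Equiv.Perm ι) :
    ⇑(MeasurableEquiv.piCongrLeft (fun _ : ι => α) π.symm) = fun t => t ∘ π := by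
  ext t a
  simp [MeasurableEquiv.coe_piCongrLeft, Equiv.piCongrLeft_apply_eq_cast]

theorem integral_comp_perm (π : Equiv.Perm ι) (f : (ι → α) → 𝕜) :
    ∫ t, f (t ∘ π) ∂Measure.pi (fun _ => μ) = ∫ t, f t ∂Measure.pi (fun _ => μ) := by
  rw [← (measurePreserving_piCongrLeft (fun _ => μ) π.symm).integral_comp' f,
    MeasurableEquiv.coe_piCongrLeft_symm_perm]

theorem MeasureTheory.Integrable.comp_perm {f : (ι → α) → 𝕜}
    (hf : Integrable f (Measure.pi fun _ => μ)) (π : Equiv.Perm ι) :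
    Integrable (fun t => f (t ∘ π)) (Measure.pi fun _ => μ) := by
  have h := ((measurePreserving_piCongrLeft (fun _ => μ) π.symm).integrable_comp_emb
    (MeasurableEquiv.measurableEmbedding _)).mpr hf
  rwa [MeasurableEquiv.coe_piCongrLeft_symm_perm] at h

variable [DecidableEq ι]

theorem integrable_prod_mul_det (F G : ι → α → 𝕜)
    (hFG : ∀ a b, Integrable (fun x => F a x * G b x) μ) :
    Integrable (fun t => (∏ a, F a (t a)) * (Matrix.of fun b a => G b (t a)).det)
      (Measure.pi fun _ => μ) := by
  simp_rw [Matrix.prod_mul_det_eq_sum_sign]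
  exact integrable_finsetSum _ fun σ _ =>
    (Integrable.fintype_prod (f := fun a x => F a x * G (σ a) x) fun a => hFG a (σ a)).const_mul _

theorem det_integral_mul_eq_integral_prod_mul_det (F G : ι → α → 𝕜)
    (hFG : ∀ a b, Integrable (fun x => F a x * G b x) μ) :
    (Matrix.of fun a b => ∫ x, F a x * G b x ∂μ).det =
      ∫ t, (∏ a, F a (t a)) * (Matrix.of fun b a => G b (t a)).det ∂Measure.pi fun _ => μ := by
  simp_rw [Matrix.prod_mul_det_eq_sum_sign, ← Matrix.det_transpose (Matrix.of _), Matrix.det_apply']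
  rw [integral_finsetSum _ fun σ _ =>
    (Integrable.fintype_prod (f := fun a x => F a x * G (σ a) x) fun a => hFG a (σ a)).const_mul _]
  refine sum_congr rfl fun σ _ => ?_
  rw [integral_const_mul, integral_fintype_prod_eq_prod (f := fun a x => F a x * G (σ a) x)]
  rfl

theorem card_mul_integral_mul_eq_integral_sum_sign {Γ : Type*} [Fintype Γ]
    (ρ : Γ → Equiv.Perm ι) (P D : (ι → α) → 𝕜)
    (hD : ∀ (π : Equiv.Perm ι) t, D (t ∘ π) = ((Equiv.Perm.sign π : ℤ) : 𝕜) * D t)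
    (hPD : Integrable (fun t => P t * D t) (Measure.pi fun _ => μ)) :
    (Fintype.card Γ : 𝕜) * ∫ t, P t * D t ∂Measure.pi (fun _ => μ) =
      ∫ t, (∑ g, ((Equiv.Perm.sign (ρ g) : ℤ) : 𝕜) * P (t ∘ ρ g)) * D t
        ∂Measure.pi (fun _ => μ) := by
  have hcomp : ∀ g t, ((Equiv.Perm.sign (ρ g) : ℤ) : 𝕜) * P (t ∘ ρ g) * D t =
      P (t ∘ ρ g) * D (t ∘ ρ g) := fun g t => by rw [hD]; ring
  simp_rw [sum_mul, hcomp]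
  rw [integral_finsetSum _ fun g _ => hPD.comp_perm (ρ g)]
  simp_rw [integral_comp_perm (ρ _) (fun t => P t * D t)]
  rw [sum_const, card_univ, nsmul_eq_mul]

theorem det_integral_mul_eq_inv_card_mul_integral {Γ : Type*} [Fintype Γ] [Nonempty Γ]
    (ρ : Γ → Equiv.Perm ι) (F G : ι → α → 𝕜)
    (hFG : ∀ a b, Integrable (fun x => F a x * G b x) μ) :
    (Matrix.of fun a b => ∫ x, F a x * G b x ∂μ).det =
      (Fintype.card Γ : 𝕜)⁻¹ *
        ∫ t, (∑ g, ((Equiv.Perm.sign (ρ g) : ℤ) : 𝕜) * ∏ a, F a (t (ρ g a))) *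
          (Matrix.of fun b a => G b (t a)).det ∂Measure.pi fun _ => μ := by
  rw [det_integral_mul_eq_integral_prod_mul_det F G hFG,
    eq_inv_mul_iff_mul_eq₀ (Nat.cast_ne_zero.mpr Fintype.card_ne_zero)]
  exact card_mul_integral_mul_eq_integral_sum_sign ρ _ _
    (fun π t => Matrix.det_permute' π (Matrix.of fun b a => G b (t a)))
    (integrable_prod_mul_det F G hFG)

end Integration

theorem sum_sign_sigmaCongrRight_mul_det {m : ℕ} {q : Fin m → ℕ} {δ : ℤ} (hδ : δ = 1 ∨ δ = -1)
    (c : ℂ) (x y : (Σ i : Fin m, Fin (2 * q i)) → ℂ) (hx : ∀ a, x a ≠ 0) :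
    (∑ σ : ∀ i, Equiv.Perm (Fin (2 * q i)),
        ((Equiv.Perm.sign (Equiv.Perm.sigmaCongrRight σ) : ℤ) : ℂ) *
          ∏ a, y (Equiv.Perm.sigmaCongrRight σ a) *
            x (Equiv.Perm.sigmaCongrRight σ a) ^ (a.2 : ℕ)) *
        (Matrix.of fun b a => (x a ^ δ + c) ^ (finSigmaFinEquiv b : ℕ)).det =
      (∏ s, y s * (if δ = 1 then 1 else Complex.I * x s ^ (1 - 2 * (q s.1 : ℤ)))) *
        (∏ i, vandC (fun l : Fin (2 * q i) => x ⟨i, l⟩) ^ 2) *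
        ∏ j, ∏ k ∈ Ioi j, ∏ lk : Fin (2 * q k), ∏ lj : Fin (2 * q j),
          (x ⟨k, lk⟩ ^ δ - x ⟨j, lj⟩ ^ δ) := by
  simp_rw [sum_sign_sigmaCongrRight_mul_prod, det_pow_finSigmaFinEquiv, vandC_add_const,
    add_sub_add_right_eq_sub, vandC_zpow_of_sign _ hδ _ fun l => hx _, prod_mul_distrib,
    ← univ_sigma_univ, prod_sigma, prod_pow]
  ring

theorem qdet_lemma_general
    (m : ℕ) (q : Fin m → ℕ)
    (δ : ℤ) (hδ : δ = 1 ∨ δ = -1) (c : ℂ)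
    (Z : ℝ → ℂ) (hZ : ∀ t, Z t ≠ 0)
    (W : Fin m → ℝ → ℂ)
    (hint1 : ∀ s srow : Σ i : Fin m, Fin (2 * q i),
        Integrable (fun t : ℝ => W s.1 t * Z t ^ (s.2 : ℕ) *
          (Z t ^ δ + c) ^ ((∑ i' ∈ Finset.Iio srow.1, 2 * q i') + (srow.2 : ℕ)))) :
    Matrix.det (Matrix.of
        fun scol srow : Σ i : Fin m, Fin (2 * q i) =>
          ∫ t : ℝ, W scol.1 t * Z t ^ (scol.2 : ℕ) *
            (Z t ^ δ + c) ^ ((∑ i' ∈ Finset.Iio srow.1, 2 * q i') + (srow.2 : ℕ)))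
      = (∏ i : Fin m, (((2 * q i).factorial : ℂ))⁻¹) *
          ∫ t : (Σ i : Fin m, Fin (2 * q i)) → ℝ,
            (∏ s : Σ i : Fin m, Fin (2 * q i),
                W s.1 (t s) * (if δ = 1 then 1 else Complex.I * Z (t s) ^ (1 - 2 * (q s.1 : ℤ)))) *
              (∏ i : Fin m, vandC (fun l : Fin (2 * q i) => Z (t ⟨i, l⟩)) ^ 2) *
              ∏ j : Fin m, ∏ k ∈ Finset.Ioi j, ∏ lk : Fin (2 * q k), ∏ lj : Fin (2 * q j),
                (Z (t ⟨k, lk⟩) ^ δ - Z (t ⟨j, lj⟩) ^ δ) := by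
  simp_rw [← finSigmaFinEquiv_apply_eq_sum_Iio] at hint1 ⊢
  rw [det_integral_mul_eq_inv_card_mul_integral (fun σ => Equiv.Perm.sigmaCongrRight σ) _ _ hint1,
    ← volume_pi]
  congr 1
  · simp [Fintype.card_pi, Fintype.card_perm]
  · refine integral_congr_ae (Filter.Eventually.of_forall fun t => ?_)
    exact sum_sign_sigmaCongrRight_mul_det hδ c (fun a => Z (t a)) (fun a => W a.1 (t a))
      fun a => hZ _

/-- the q-determinant lemma.  The `K × K` determinant, with rows `j`
and columns indexed lexicographically by pairs `(i, l_i)` (both encoded by the sigma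
type `Σ i, Fin (2 q i)`, a row `⟨i,l⟩` corresponding to `j - 1 = τ(i) + l`), whose
`((i,l),j)` entry is `∫ W_i(t) Z(t)^l (Z(t)^δ + c)^{j-1} dt`, equals
`∏_i (1/(2q_i)!)` times the `K`-fold integral of
`∏ W·b_{δ,q_i}(Z) · ∏_i Δ_{2q_i}(Z-block)² · ∏_{j<k} ∏∏ (Z^δ - Z^δ)`. -/
theorem qdet_lemma
    (m : ℕ) (hm : 1 ≤ m) (q : Fin m → ℕ) (hq : ∀ i, 1 ≤ q i)
    (δ : ℤ) (hδ : δ = 1 ∨ δ = -1) (c : ℂ)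
    (Z : ℝ → ℂ) (hZ : ∀ t, Z t ≠ 0) (hZm : Measurable Z)
    (W : Fin m → ℝ → ℂ) (hW : ∀ i, Measurable (W i))
    (hint1 : ∀ s srow : Σ i : Fin m, Fin (2 * q i),
        Integrable (fun t : ℝ => W s.1 t * Z t ^ (s.2 : ℕ) *
          (Z t ^ δ + c) ^ ((∑ i' ∈ Finset.Iio srow.1, 2 * q i') + (srow.2 : ℕ))))
    (hint2 : Integrable (fun t : (Σ i : Fin m, Fin (2 * q i)) → ℝ =>
        (∏ s : Σ i : Fin m, Fin (2 * q i),
            W s.1 (t s) * (if δ = 1 then 1 else Complex.I * Z (t s) ^ (1 - 2 * (q s.1 : ℤ)))) *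
          (∏ i : Fin m, vandC (fun l : Fin (2 * q i) => Z (t ⟨i, l⟩)) ^ 2) *
          ∏ j : Fin m, ∏ k ∈ Finset.Ioi j, ∏ lk : Fin (2 * q k), ∏ lj : Fin (2 * q j),
            (Z (t ⟨k, lk⟩) ^ δ - Z (t ⟨j, lj⟩) ^ δ))) :
    Matrix.det (Matrix.of
        fun scol srow : Σ i : Fin m, Fin (2 * q i) =>
          ∫ t : ℝ, W scol.1 t * Z t ^ (scol.2 : ℕ) *
            (Z t ^ δ + c) ^ ((∑ i' ∈ Finset.Iio srow.1, 2 * q i') + (srow.2 : ℕ)))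
      = (∏ i : Fin m, (((2 * q i).factorial : ℂ))⁻¹) *
          ∫ t : (Σ i : Fin m, Fin (2 * q i)) → ℝ,
            (∏ s : Σ i : Fin m, Fin (2 * q i),
                W s.1 (t s) * (if δ = 1 then 1 else Complex.I * Z (t s) ^ (1 - 2 * (q s.1 : ℤ)))) *
              (∏ i : Fin m, vandC (fun l : Fin (2 * q i) => Z (t ⟨i, l⟩)) ^ 2) *
              ∏ j : Fin m, ∏ k ∈ Finset.Ioi j, ∏ lk : Fin (2 * q k), ∏ lj : Fin (2 * q j),
                (Z (t ⟨k, lk⟩) ^ δ - Z (t ⟨j, lj⟩) ^ δ) :=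
  qdet_lemma_general m q δ hδ c Z hZ W hint1
end

section
/- (Mehta/Selberg integral.) For every p ∈ ℕ with p ≥ 1 and every real a > 0, ∫_{ℝ^p} Δ_p(x)² · ∏_{l=1}^p e^{−a x_l²} dx = (π / 2^{p−1})^{p/2} · a^{−p²/2} · ∏_{l=1}^p l!. -/
/-!
Write `Δ_p(x)` both as `det [x_i ^ j]` and as `det [He_j (x_i)]`, the probabilists' Hermite
polynomials being monic of degree `j`. Andreief's identity turns the integral of the product of
the two determinants against `∏ e^{-x_i²/2}` into `p!` times the determinant of the moment matrix
`∫ x^j He_k(x) e^{-x²/2} dx`. By Rodrigues' formula `He_k e^{-x²/2} = (-1)^k (e^{-x²/2})^{(k)}`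
and `k`-fold integration by parts this matrix is lower triangular with diagonal `k! √(2π)`.
The general `a > 0` follows from the substitution `x ↦ √(2a) x`, under which `Δ_p` is
homogeneous of degree `p(p-1)/2`.
-/

open MeasureTheory Finset

/-- The Vandermonde product for a real tuple. -/
noncomputable def vandR {n : ℕ} (z : Fin n → ℝ) : ℝ :=
  ∏ j : Fin n, ∏ k ∈ Finset.Ioi j, (z k - z j)

open Equiv Matrix

namespace Matrix

variable {ι R : Type*} [Fintype ι] [DecidableEq ι] [CommRing R]

theorem sum_perm_sign_mul_sign_mul_prod (M : Matrix ι ι R) :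
    ∑ σ : Perm ι, ∑ τ : Perm ι,
      ((Perm.sign σ : ℤ) : R) * (Perm.sign τ : ℤ) * ∏ i, M (σ i) (τ i)
      = (Fintype.card ι).factorial * M.det := by
  have h : ∀ σ : Perm ι, ∑ τ : Perm ι,
      ((Perm.sign σ : ℤ) : R) * (Perm.sign τ : ℤ) * ∏ i, M (σ i) (τ i) = M.det := by
    intro σ
    -- substitute `τ = ρ * σ` and reindex the product by `σ`
    rw [← Equiv.sum_comp (Equiv.mulRight σ), ← det_transpose, det_apply']
    refine sum_congr rfl fun ρ _ => ?_
    have hσ : ((Perm.sign σ : ℤ) : R) * (Perm.sign σ : ℤ) = 1 := by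
      rw [← Int.cast_mul, ← Units.val_mul, Int.units_mul_self, Units.val_one, Int.cast_one]
    rw [Equiv.coe_mulRight, Perm.sign_mul, Units.val_mul, Int.cast_mul,
      Fintype.prod_equiv σ (fun i => M (σ i) ((ρ * σ) i)) (fun j => M j (ρ j)) (fun _ => rfl)]
    simp only [transpose_apply]
    linear_combination (↑↑(Perm.sign ρ) * ∏ j, M j (ρ j)) * hσ
  rw [sum_congr rfl fun σ _ => h σ, sum_const, card_univ, Fintype.card_perm, nsmul_eq_mul]

end Matrix

namespace MeasureTheory

variable {ι α : Type*} [Fintype ι] [DecidableEq ι] [MeasurableSpace α] {μ : Measure α}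
  [SigmaFinite μ]

theorem integral_det_mul_det (f g : ι → α → ℝ)
    (hfg : ∀ j k, Integrable (fun x => f j x * g k x) μ) :
    ∫ x : ι → α, (of fun i j => f j (x i)).det * (of fun i j => g j (x i)).det
        ∂(Measure.pi fun _ => μ)
      = ((Fintype.card ι).factorial : ℝ) * (of fun j k => ∫ x, f j x * g k x ∂μ).det := by
  have hexpand : ∀ x : ι → α,
      (of fun i j => f j (x i)).det * (of fun i j => g j (x i)).det
        = ∑ σ : Perm ι, ∑ τ : Perm ι, ((Perm.sign σ : ℤ) : ℝ) * (Perm.sign τ : ℤ)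
            * ∏ i, (f (σ i) (x i) * g (τ i) (x i)) := by
    intro x
    have hdet : ∀ h : ι → α → ℝ, (of fun i j => h j (x i)).det
        = ∑ σ : Perm ι, ((Perm.sign σ : ℤ) : ℝ) * ∏ i, h (σ i) (x i) := fun h => by
      rw [← det_transpose, det_apply']
      rfl
    simp only [hdet, sum_mul_sum, prod_mul_distrib]
    refine sum_congr rfl fun σ _ => sum_congr rfl fun τ _ => ?_
    ring
  have hint : ∀ σ τ : Perm ι, Integrable
      (fun x : ι → α => ∏ i, (f (σ i) (x i) * g (τ i) (x i))) (Measure.pi fun _ => μ) :=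
    fun σ τ => Integrable.fintype_prod (f := fun i y => f (σ i) y * g (τ i) y)
      fun i => hfg _ _
  simp_rw [hexpand]
  rw [integral_finsetSum _ fun σ _ => integrable_finsetSum _ fun τ _ => (hint σ τ).const_mul _,
    ← sum_perm_sign_mul_sign_mul_prod]
  refine sum_congr rfl fun σ _ => ?_
  rw [integral_finsetSum _ fun τ _ => (hint σ τ).const_mul _]
  refine sum_congr rfl fun τ _ => ?_
  rw [integral_const_mul, integral_fintype_prod_eq_prod (fun i y => f (σ i) y * g (τ i) y)]
  rfl

end MeasureTheory

open Polynomial Real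

theorem integrable_eval_mul_exp_neg_mul_sq {b : ℝ} (hb : 0 < b) (P : ℝ[X]) :
    Integrable fun x : ℝ => P.eval x * exp (-b * x ^ 2) := by
  induction P using Polynomial.induction_on' with
  | add P Q hP hQ => simpa only [eval_add, add_mul, Pi.add_def] using hP.add hQ
  | monomial n c =>
    have h := integrable_rpow_mul_exp_neg_mul_sq hb (s := n)
      (by linarith [n.cast_nonneg (α := ℝ)])
    simp_rw [rpow_natCast] at h
    simpa only [eval_monomial, mul_assoc] using h.const_mul c

local notation "γ" => fun x : ℝ => exp (-(x ^ 2 / 2))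

theorem neg_one_pow_mul_neg_one_pow {R : Type*} [Monoid R] [HasDistribNeg R] (k : ℕ) :
    (-1 : R) ^ k * (-1) ^ k = 1 := by
  rw [← pow_add, Even.neg_one_pow ⟨k, rfl⟩]

theorem iterate_deriv_gaussian_eq_eval_mul (k : ℕ) (x : ℝ) :
    deriv^[k] γ x
      = ((-1) ^ k * (hermite k).map (Int.castRingHom ℝ)).eval x * exp (-(x ^ 2 / 2)) := by
  rw [deriv_gaussian_eq_hermite_mul_gaussian, eval_mul, aeval_def, eval₂_eq_eval_map]
  simp

theorem integrable_eval_mul_iterate_deriv_gaussian (P : ℝ[X]) (k : ℕ) :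
    Integrable fun x => P.eval x * deriv^[k] γ x := by
  simp_rw [iterate_deriv_gaussian_eq_eval_mul, ← mul_assoc, ← eval_mul]
  convert integrable_eval_mul_exp_neg_mul_sq (b := 1 / 2) (by norm_num) _ using 4
  ring

theorem hasDerivAt_iterate_deriv_gaussian (k : ℕ) (x : ℝ) :
    HasDerivAt (deriv^[k] γ) (deriv^[k + 1] γ x) x := by
  have hγ : ContDiff ℝ ⊤ γ := by fun_prop
  rw [← iteratedDeriv_eq_iterate, ← iteratedDeriv_eq_iterate, iteratedDeriv_succ]
  exact (hγ.differentiable_iteratedDeriv k (WithTop.coe_lt_top _)).differentiableAt.hasDerivAt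

theorem integral_eval_mul_iterate_deriv_gaussian (P : ℝ[X]) (k : ℕ) :
    ∫ x, P.eval x * deriv^[k] γ x
      = (-1) ^ k * ∫ x, (derivative^[k] P).eval x * exp (-(x ^ 2 / 2)) := by
  induction k generalizing P with
  | zero => simp
  | succ k ih =>
    rw [integral_mul_deriv_eq_deriv_mul_of_integrable (fun x _ => P.hasDerivAt x)
      (fun x _ => hasDerivAt_iterate_deriv_gaussian k x)
      (integrable_eval_mul_iterate_deriv_gaussian P (k + 1))
      (integrable_eval_mul_iterate_deriv_gaussian _ k)
      (integrable_eval_mul_iterate_deriv_gaussian P k), ih, Function.iterate_succ_apply, pow_succ]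
    ring

theorem hermite_mul_gaussian_eq_iterate_deriv (k : ℕ) (x : ℝ) :
    aeval x (hermite k) * exp (-(x ^ 2 / 2)) = (-1) ^ k * deriv^[k] γ x := by
  rw [deriv_gaussian_eq_hermite_mul_gaussian]
  linear_combination (-(aeval x (hermite k) * exp (-(x ^ 2 / 2)))) *
    neg_one_pow_mul_neg_one_pow (R := ℝ) k

theorem integrable_pow_mul_hermite_mul_gaussian (j k : ℕ) :
    Integrable fun x : ℝ => x ^ j * (aeval x (hermite k) * exp (-(x ^ 2 / 2))) := by
  simpa only [hermite_mul_gaussian_eq_iterate_deriv, eval_pow, eval_X,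
    mul_left_comm _ ((-1 : ℝ) ^ k)]
    using (integrable_eval_mul_iterate_deriv_gaussian (X ^ j) k).const_mul ((-1) ^ k)

theorem integral_pow_mul_hermite_mul_gaussian (j k : ℕ) :
    ∫ x, x ^ j * (aeval x (hermite k) * exp (-(x ^ 2 / 2)))
      = ∫ x, (derivative^[k] (X ^ j : ℝ[X])).eval x * exp (-(x ^ 2 / 2)) := by
  have h : ∀ x : ℝ, x ^ j * (aeval x (hermite k) * exp (-(x ^ 2 / 2)))
      = (-1) ^ k * ((X ^ j : ℝ[X]).eval x * deriv^[k] γ x) := fun x => by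
    rw [hermite_mul_gaussian_eq_iterate_deriv, eval_pow, eval_X]
    ring
  simp_rw [h, integral_const_mul, integral_eval_mul_iterate_deriv_gaussian, ← mul_assoc,
    neg_one_pow_mul_neg_one_pow, one_mul]

theorem integral_pow_mul_hermite_mul_gaussian_of_lt {j k : ℕ} (hjk : j < k) :
    ∫ x, x ^ j * (aeval x (hermite k) * exp (-(x ^ 2 / 2))) = 0 := by
  rw [integral_pow_mul_hermite_mul_gaussian,
    iterate_derivative_eq_zero (by rwa [natDegree_X_pow])]
  simp

theorem integral_pow_mul_hermite_mul_gaussian_self (k : ℕ) :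
    ∫ x, x ^ k * (aeval x (hermite k) * exp (-(x ^ 2 / 2))) = k.factorial * √(2 * π) := by
  rw [integral_pow_mul_hermite_mul_gaussian, iterate_derivative_X_pow_eq_C_mul,
    Nat.descFactorial_self]
  simp only [Nat.sub_self, pow_zero, mul_one, eval_C]
  have hγ : ∫ x : ℝ, exp (-(x ^ 2 / 2)) = √(2 * π) := by
    convert integral_gaussian (1 / 2) using 4 <;> ring
  rw [integral_const_mul, hγ]

theorem vandR_eq_det_vandermonde {p : ℕ} (x : Fin p → ℝ) : vandR x = (vandermonde x).det :=
  (det_vandermonde x).symm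

theorem vandR_eq_det_hermite {p : ℕ} (x : Fin p → ℝ) :
    vandR x = (of fun i j : Fin p => aeval (x i) (hermite j)).det := by
  rw [vandR_eq_det_vandermonde, det_eval_matrixOfPolynomials_eq_det_vandermonde x
    (fun j => (hermite j).map (Int.castRingHom ℝ))
    (fun j => ((hermite_monic j).natDegree_map _).trans natDegree_hermite)
    (fun j => (hermite_monic j).map _)]
  simp only [aeval_def, eval₂_eq_eval_map]
  rfl

theorem vandR_smul {p : ℕ} (c : ℝ) (x : Fin p → ℝ) :
    vandR (c • x) = c ^ p.choose 2 * vandR x := by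
  have h : vandermonde (c • x) = vandermonde x * diagonal fun j : Fin p => c ^ (j : ℕ) := by
    ext i j
    simp [vandermonde_apply, mul_pow, mul_comm]
  rw [vandR_eq_det_vandermonde, vandR_eq_det_vandermonde, h, det_mul, det_diagonal,
    prod_pow_eq_pow_sum, Fin.sum_univ_eq_sum_range (fun j => j), sum_range_id,
    Nat.choose_two_right, mul_comm]

theorem two_mul_choose_two_add_self (p : ℕ) : 2 * p.choose 2 + p = p ^ 2 := by
  rw [Nat.choose_two_right, Nat.mul_div_cancel' (Nat.even_mul_pred_self p).two_dvd]
  cases p <;> simp [sq, Nat.mul_succ]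

theorem integral_vandR_sq_mul_exp_neg_mul_sq {p : ℕ} {a : ℝ} (ha : 0 < a) :
    ∫ x : Fin p → ℝ, vandR x ^ 2 * ∏ l, exp (-a * x l ^ 2)
      = (√(2 * a) ^ p ^ 2)⁻¹
        * ∫ x : Fin p → ℝ, vandR x ^ 2 * ∏ l, exp (-(x l ^ 2 / 2)) := by
  set c := √(2 * a)
  have hc : 0 < c := sqrt_pos.mpr (by positivity)
  have hc2 : c ^ 2 = 2 * a := sq_sqrt (by positivity)
  have hscale : ∀ x : Fin p → ℝ,
      vandR (c • x) ^ 2 * ∏ l, exp (-((c • x) l ^ 2 / 2))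
        = c ^ (2 * p.choose 2) * (vandR x ^ 2 * ∏ l, exp (-a * x l ^ 2)) := by
    intro x
    have hl : ∀ l, -((c • x) l ^ 2 / 2) = -a * x l ^ 2 := fun l => by
      rw [Pi.smul_apply, smul_eq_mul, mul_pow, hc2]; ring
    simp only [hl, vandR_smul]
    ring
  have h := Measure.integral_comp_smul (volume : Measure (Fin p → ℝ))
    (fun y => vandR y ^ 2 * ∏ l, exp (-(y l ^ 2 / 2))) c
  simp only [hscale, integral_const_mul, Module.finrank_fin_fun, smul_eq_mul,
    abs_of_pos (inv_pos.mpr (pow_pos hc p))] at h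
  rw [← two_mul_choose_two_add_self, pow_add, mul_inv, mul_assoc, ← h, ← mul_assoc,
    inv_mul_cancel₀ (pow_ne_zero _ hc.ne'), one_mul]

theorem det_hermite_mul_gaussian {p : ℕ} (x : Fin p → ℝ) :
    (of fun i j : Fin p => aeval (x i) (hermite j) * exp (-(x i ^ 2 / 2))).det
      = (∏ i, exp (-(x i ^ 2 / 2))) * vandR x := by
  rw [vandR_eq_det_hermite, ← det_mul_column]
  simp only [of_apply, mul_comm]

theorem integral_vandR_sq_mul_gaussian (p : ℕ) :
    ∫ x : Fin p → ℝ, vandR x ^ 2 * ∏ l, exp (-(x l ^ 2 / 2))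
      = p.factorial * ∏ k : Fin p, ((k : ℕ).factorial * √(2 * π)) := by
  have hdet : ∀ x : Fin p → ℝ, vandR x ^ 2 * ∏ l, exp (-(x l ^ 2 / 2))
      = (of fun i j : Fin p => x i ^ (j : ℕ)).det
        * (of fun i j : Fin p => aeval (x i) (hermite j) * exp (-(x i ^ 2 / 2))).det := by
    intro x
    rw [det_hermite_mul_gaussian, ← vandermonde, ← vandR_eq_det_vandermonde]
    ring
  have hgram : (of fun j k : Fin p =>
      ∫ y, y ^ (j : ℕ) * (aeval y (hermite k) * exp (-(y ^ 2 / 2)))).IsLowerTriangular :=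
    fun j k hjk => integral_pow_mul_hermite_mul_gaussian_of_lt hjk
  simp_rw [hdet]
  rw [volume_pi, integral_det_mul_det (fun (j : Fin p) (y : ℝ) => y ^ (j : ℕ))
    (fun k y => aeval y (hermite k) * exp (-(y ^ 2 / 2)))
    fun j k => integrable_pow_mul_hermite_mul_gaussian j k,
    det_of_isLowerTriangular _ hgram, Fintype.card_fin]
  simp only [of_apply, integral_pow_mul_hermite_mul_gaussian_self]

theorem Nat.factorial_mul_prod_factorial (p : ℕ) :
    p.factorial * ∏ k : Fin p, (k : ℕ).factorial = ∏ l ∈ Icc 1 p, l.factorial := by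
  rw [Fin.prod_univ_eq_prod_range (fun k => k.factorial), mul_comm, ← prod_range_succ,
    Nat.prod_range_succ_factorial, Nat.prod_Icc_factorial]

theorem sqrt_pow_eq_rpow {z : ℝ} (hz : 0 ≤ z) (n : ℕ) : √z ^ n = z ^ ((n : ℝ) / 2) := by
  rw [sqrt_eq_rpow, ← rpow_natCast, ← rpow_mul hz, one_div_mul_eq_div]

theorem inv_sqrt_pow_mul_sqrt_pow {a : ℝ} (ha : 0 < a) (p : ℕ) :
    (√(2 * a) ^ p ^ 2)⁻¹ * √(2 * π) ^ p
      = (π / 2 ^ (p - 1)) ^ ((p : ℝ) / 2) * a ^ (-((p : ℝ) ^ 2) / 2) := by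
  rcases Nat.eq_zero_or_pos p with rfl | hp
  · simp
  have h2 : (2 : ℝ) ^ ((p : ℝ) ^ 2 / 2)
      = 2 ^ ((p : ℝ) / 2) * (2 ^ (p - 1)) ^ ((p : ℝ) / 2) := by
    rw [← rpow_natCast 2 (p - 1), ← rpow_mul zero_le_two, ← rpow_add two_pos, Nat.cast_sub hp]
    congr 1
    push_cast
    ring
  rw [sqrt_pow_eq_rpow (by positivity), sqrt_pow_eq_rpow (by positivity),
    mul_rpow zero_le_two ha.le, mul_rpow zero_le_two pi_pos.le, div_rpow pi_pos.le (by positivity),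
    neg_div, rpow_neg ha.le, Nat.cast_pow, h2]
  field_simp

theorem mehta_integral_general (p : ℕ) (a : ℝ) (ha : 0 < a) :
    (∫ x : Fin p → ℝ, vandR x ^ 2 * ∏ l, Real.exp (-a * (x l) ^ 2))
      = (Real.pi / 2 ^ (p - 1)) ^ ((p : ℝ) / 2) * a ^ (-((p : ℝ) ^ 2) / 2) *
          ∏ l ∈ Finset.Icc 1 p, (l.factorial : ℝ) := by
  rw [integral_vandR_sq_mul_exp_neg_mul_sq ha, integral_vandR_sq_mul_gaussian, prod_mul_distrib,
    prod_const, card_univ, Fintype.card_fin, ← inv_sqrt_pow_mul_sqrt_pow ha,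
    ← Nat.cast_prod (s := Icc 1 p), ← Nat.factorial_mul_prod_factorial]
  push_cast
  ring

/-- Mehta/Selberg integral.
`∫_{ℝ^p} Δ_p(x)² ∏ e^{-a x_l²} dx = (π/2^{p-1})^{p/2} a^{-p²/2} ∏_{l=1}^p l!`. -/
theorem mehta_integral (p : ℕ) (hp : 1 ≤ p) (a : ℝ) (ha : 0 < a) :
    (∫ x : Fin p → ℝ, vandR x ^ 2 * ∏ l, Real.exp (-a * (x l) ^ 2))
      = (Real.pi / 2 ^ (p - 1)) ^ ((p : ℝ) / 2) * a ^ (-((p : ℝ) ^ 2) / 2) *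
          ∏ l ∈ Finset.Icc 1 p, (l.factorial : ℝ) :=
  mehta_integral_general p a ha
end

section
/- (Contour integral representation of the Laguerre polynomials.) For every n ∈ ℕ, every real α > −1, and every x ∈ ℝ: Σ_{k=0}^{n} [ Γ(n+α+1) / ( Γ(k+α+1) · (n−k)! · k! ) ] · (−x)^k = (1/(2^{α+1} π i)) · ∮_{|z|=1} e^{−xz/2} · (z+2)^{n+α} · z^{−n−1} dz, where the contour is the positively oriented unit circle in ℂ, (z+2)^{n+α} denotes the principal complex power (well-defined since Re(z+2) > 0 on |z| = 1), Γ is the Gamma function, and i is the imaginary unit. -/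
/-!
With `f z = exp (-x z / 2) (z + 2) ^ (n + α)`, which is holomorphic on a neighbourhood of the
closed unit disc, Cauchy's formula turns the contour integral into `2πi f⁽ⁿ⁾(0) / n!`.
The Leibniz rule expands `f⁽ⁿ⁾(0)` as `∑ₖ (n choose k) (-x/2)ᵏ (n+α)(n+α-1)⋯(k+α+1) 2^(k+α)`,
and the falling factorial is `Γ(n+α+1) / Γ(k+α+1)`.
-/

open Complex Finset Polynomial

theorem iteratedDeriv_cpow_const {c z : ℂ} (hz : z ∈ slitPlane) (k : ℕ) :
    iteratedDeriv k (· ^ c) z = (descPochhammer ℂ k).eval c * z ^ (c - k) := by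
  induction k generalizing z with
  | zero => simp
  | succ k ih =>
    have hev : iteratedDeriv k (· ^ c) =ᶠ[nhds z]
        fun w => (descPochhammer ℂ k).eval c * w ^ (c - k) :=
      Filter.eventually_of_mem (isOpen_slitPlane.mem_nhds hz) fun w hw => ih hw
    rw [iteratedDeriv_succ, hev.deriv_eq,
      ((hasStrictDerivAt_cpow_const hz).hasDerivAt.const_mul _).deriv, descPochhammer_succ_eval]
    push_cast
    ring_nf

theorem iteratedDeriv_cexp_const_mul_mul_cpow_add {a b c z : ℂ} (hz : z + b ∈ slitPlane)
    (n : ℕ) :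
    iteratedDeriv n (fun w => exp (a * w) * (w + b) ^ c) z =
      ∑ i ∈ range (n + 1), n.choose i * (a ^ i * exp (a * z)) *
        ((descPochhammer ℂ (n - i)).eval c * (z + b) ^ (c - (n - i : ℕ))) := by
  have hexp : ContDiffAt ℂ n (fun w => exp (a * w)) z := by fun_prop
  have hpow : ContDiffAt ℂ n (fun w => (w + b) ^ c) z :=
    ((analyticAt_id.add analyticAt_const).cpow analyticAt_const hz).contDiffAt
  rw [iteratedDeriv_fun_mul hexp hpow]
  simp only [iteratedDeriv_cexp_const_mul, iteratedDeriv_comp_add_const _ (· ^ c),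
    iteratedDeriv_cpow_const hz]

theorem descPochhammer_eval_ofReal (m : ℕ) (r : ℝ) :
    (descPochhammer ℂ m).eval (r : ℂ) = (descPochhammer ℝ m).eval r := by
  simp [descPochhammer_eval_eq_prod_range]

theorem Real.Gamma_add_nat_add_one_eq_descPochhammer_mul {r : ℝ} (hr : -1 < r) (m : ℕ) :
    Gamma (r + m + 1) = (descPochhammer ℝ m).eval (r + m) * Gamma (r + 1) := by
  induction m with
  | zero => simp
  | succ m ih =>
    have hpos : r + m + 1 ≠ 0 := by linarith [(m.cast_nonneg : (0 : ℝ) ≤ m)]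
    rw [descPochhammer_succ_left, eval_mul, eval_X, eval_comp, eval_sub, eval_X, eval_one]
    push_cast
    rw [show r + (m + 1) + 1 = (r + m + 1) + 1 by ring, Gamma_add_one hpos, ih]
    ring_nf

theorem Real.Gamma_div_Gamma_mul_factorial_mul_factorial {n k : ℕ} (hk : k ≤ n) {α : ℝ}
    (hα : -1 < α) :
    Gamma (n + α + 1) / (Gamma (k + α + 1) * (n - k).factorial * k.factorial) =
      n.choose k * (descPochhammer ℝ (n - k)).eval (n + α) / n.factorial := by
  have hr : -1 < k + α := by linarith [(k.cast_nonneg : (0 : ℝ) ≤ k)]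
  have hΓ := Gamma_add_nat_add_one_eq_descPochhammer_mul hr (n - k)
  rw [Nat.cast_sub hk, show (k : ℝ) + α + (n - k) = n + α by ring] at hΓ
  have hΓ0 : Gamma (k + α + 1) ≠ 0 := (Gamma_pos_of_pos (by linarith)).ne'
  rw [hΓ, ← Nat.choose_mul_factorial_mul_factorial hk]
  push_cast
  field_simp [Nat.choose_pos hk |>.ne']

theorem circleIntegral_cexp_const_mul_mul_cpow_add_mul_zpow {a b c : ℂ} {R : ℝ} (hR : 0 < R)
    (hRb : R < b.re) (n : ℕ) :
    (∮ z in C(0, R), exp (a * z) * (z + b) ^ c * z ^ (-(n : ℤ) - 1)) =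
      2 * Real.pi * I / n.factorial * ∑ i ∈ range (n + 1), n.choose i * a ^ i *
        ((descPochhammer ℂ (n - i)).eval c * b ^ (c - (n - i : ℕ))) := by
  have hslit : ∀ z ∈ Metric.closedBall (0 : ℂ) R, z + b ∈ slitPlane := fun z hz => by
    have := (abs_le.mp ((abs_re_le_norm z).trans (mem_closedBall_zero_iff.mp hz))).1
    exact Or.inl (by rw [add_re]; linarith)
  have hdiff : DifferentiableOn ℂ (fun z => exp (a * z) * (z + b) ^ c)
      (Metric.closedBall 0 R) := fun z hz => by
    have := hslit z hz
    exact DifferentiableAt.differentiableWithinAt (by fun_prop (disch := assumption))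
  have hintegrand : (∮ z in C(0, R), exp (a * z) * (z + b) ^ c * z ^ (-(n : ℤ) - 1)) =
      ∮ z in C(0, R), (1 / (z - 0) ^ (n + 1)) • (exp (a * z) * (z + b) ^ c) := by
    refine circleIntegral.integral_congr hR.le fun z _ => ?_
    rw [show -(n : ℤ) - 1 = -((n + 1 : ℕ) : ℤ) by push_cast; ring, zpow_neg, zpow_natCast]
    simp only [sub_zero, smul_eq_mul]
    ring
  rw [hintegrand, hdiff.circleIntegral_one_div_sub_center_pow_smul hR n,
    iteratedDeriv_cexp_const_mul_mul_cpow_add (hslit 0 (by simp [hR.le])) n, smul_eq_mul]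
  simp only [mul_zero, exp_zero, mul_one, zero_add, mul_assoc]

/-- contour integral representation of the generalized Laguerre
polynomials.  For `n ∈ ℕ`, `α > -1` and `x ∈ ℝ`,
`L_n^{(α)}(x) = Σ_{k=0}^n Γ(n+α+1)/(Γ(k+α+1)(n-k)!k!)·(−x)^k
  = (1/(2^{α+1} π i)) ∮_{|z|=1} e^{-xz/2}(z+2)^{n+α} z^{-n-1} dz`,
with the principal power `(z+2)^{n+α}` and the positively oriented unit circle. -/
theorem laguerre_contour_integral (n : ℕ) (α : ℝ) (hα : -1 < α) (x : ℝ) :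
    ((∑ k ∈ Finset.range (n + 1),
          Real.Gamma (n + α + 1) /
            (Real.Gamma (k + α + 1) * (n - k).factorial * k.factorial) *
            (-x) ^ k : ℝ) : ℂ)
      = (1 / (((2 : ℝ) ^ (α + 1) : ℝ) * Real.pi * Complex.I)) *
          ∮ z in C(0, 1),
            Complex.exp (-(x : ℂ) * z / 2) * (z + 2) ^ ((n : ℂ) + (α : ℂ)) *
              z ^ (-(n : ℤ) - 1) := by
  simp_rw [show ∀ z : ℂ, -(x : ℂ) * z / 2 = -x / 2 * z by intro z; ring]
  rw [circleIntegral_cexp_const_mul_mul_cpow_add_mul_zpow one_pos (by norm_num) n, ofReal_sum,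
    mul_sum, mul_sum]
  refine sum_congr rfl fun k hk => ?_
  have hk : k ≤ n := Nat.lt_succ_iff.mp (mem_range.mp hk)
  have hexponent : (n : ℂ) + α - (n - k : ℕ) = ((k + α : ℝ) : ℂ) := by
    push_cast [Nat.cast_sub hk]; ring
  have hpow : (2 : ℂ) ^ ((k + α : ℝ) : ℂ) = ((2 ^ k * 2 ^ α : ℝ) : ℂ) := by
    rw [← ofReal_ofNat, ← ofReal_cpow zero_le_two, Real.rpow_add two_pos, Real.rpow_natCast]
  rw [Real.Gamma_div_Gamma_mul_factorial_mul_factorial hk hα, hexponent, hpow,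
    show (n : ℂ) + α = ((n + α : ℝ) : ℂ) by push_cast; ring, descPochhammer_eval_ofReal,
    Real.rpow_add two_pos, Real.rpow_one]
  have hπ : (Real.pi : ℂ) ≠ 0 := ofReal_ne_zero.mpr Real.pi_ne_zero
  have h2α : (((2 : ℝ) ^ α : ℝ) : ℂ) ≠ 0 := ofReal_ne_zero.mpr (by positivity)
  push_cast
  rw [div_pow]
  field_simp
end
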